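/- arXiv:2602.12766 — 3 statements merged into one kernel-verified Lean document; each statement's English description precedes it below -/
import Mathlib

section
/- Let q be prime, L coprime to q, m the multiplicative order of q mod L, and beta a primitive L-th root of unity in F_{q^m}. For any n <= m, any j coprime to L with 1 <= j <= L-1, and any constant 0 <= c <= L-1, the n elements beta^{cj}, beta^{(1+c)j}, ..., beta^{(n-1+c)j} of F_{q^m} are linearly independent over F_q. -/
open Polynomial

/-- Let `q` be prime, `L` coprime to `q`, `m` the multiplicative order of `q` mod `L`,
and `β` a primitive `L`-th root of unity in `F_{q^m}`.  For `n ≤ m`, `j` coprime to `L`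
with `1 ≤ j ≤ L-1`, and a constant `c ≤ L-1`, the elements
`β^{cj}, β^{(1+c)j}, …, β^{(n-1+c)j}` are linearly independent over `F_q`
(elements of `F_q` being those `a` with `a ^ q = a`). -/
theorem consecutive_powers_linearly_independent
    (q L m n c j : ℕ) (hq : q.Prime) (hL : 0 < L) (hco : Nat.Coprime q L)
    (hm : orderOf (q : ZMod L) = m)
    (K : Type*) [Field K] [Fintype K] (hcard : Fintype.card K = q ^ m)
    (β : K) (hβ : IsPrimitiveRoot β L)
    (hn : n ≤ m) (hj1 : 1 ≤ j) (hj2 : j ≤ L - 1) (hjL : Nat.Coprime j L)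
    (hc : c ≤ L - 1)
    (a : Fin n → K) (ha : ∀ i, a i ^ q = a i)
    (hsum : ∑ i : Fin n, a i * β ^ ((c + (i : ℕ)) * j) = 0) :
    ∀ i, a i = 0 := by
  intro i0
  have hn0 : 0 < n := i0.pos
  have hm0 : 0 < m := lt_of_lt_of_le hn0 hn
  -- characteristic of K is q
  have hKq : CharP K q := by
    have hp : (ringChar K).Prime := CharP.char_is_prime K (ringChar K)
    obtain ⟨s, hps, hs⟩ := FiniteField.card K (ringChar K)
    have hdvd : q ∣ ringChar K ^ (s : ℕ) := by
      rw [← hs, hcard]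
      exact dvd_pow_self q hm0.ne'
    have : q = ringChar K := ((Nat.prime_dvd_prime_iff_eq hq hp).mp
      (hq.dvd_of_dvd_pow hdvd))
    rw [this]; exact ringChar.charP K
  haveI : ExpChar K q := ExpChar.prime hq
  have hβ0 : β ≠ 0 := hβ.ne_zero hL.ne'
  -- a i fixed by all powers of Frobenius
  have ha' : ∀ i k, a i ^ q ^ k = a i := by
    intro i k
    induction k with
    | zero => simp
    | succ k ih => rw [pow_succ, pow_mul, ih, ha]
  -- apply Frobenius k times to the relation
  have key : ∀ k : ℕ, ∑ i : Fin n, a i * (β ^ (j * q ^ k)) ^ (i : ℕ) = 0 := by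
    intro k
    have h1 : (∑ i : Fin n, a i * β ^ ((c + (i : ℕ)) * j)) ^ q ^ k = 0 := by
      rw [hsum, zero_pow (pow_ne_zero _ hq.ne_zero)]
    rw [sum_pow_char_pow] at h1
    have h2 : ∑ i : Fin n, a i * β ^ ((c + (i : ℕ)) * j * q ^ k) = 0 := by
      rw [← h1]
      refine Finset.sum_congr rfl fun i _ => ?_
      rw [mul_pow, ha', ← pow_mul]
    have h3 : ∀ i : Fin n,
        a i * β ^ ((c + (i : ℕ)) * j * q ^ k)
          = β ^ (c * j * q ^ k) * (a i * (β ^ (j * q ^ k)) ^ (i : ℕ)) := by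
      intro i
      have he : (c + (i : ℕ)) * j * q ^ k = c * j * q ^ k + j * q ^ k * (i : ℕ) := by ring
      rw [he, pow_add, ← pow_mul]
      ring
    rw [Finset.sum_congr rfl fun i _ => h3 i, ← Finset.mul_sum] at h2
    exact (mul_eq_zero.mp h2).resolve_left (pow_ne_zero _ hβ0)
  -- the points β ^ (j * q ^ k), k < n, are pairwise distinct
  set x : Fin n → K := fun k => β ^ (j * q ^ (k : ℕ)) with hx
  have hinj : Function.Injective x := by
    have haux : ∀ k l : Fin n, (k : ℕ) ≤ (l : ℕ) → x k = x l → (k : ℕ) = (l : ℕ) := by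
      intro k l hkl hxkl
      have hqpos : ∀ t : ℕ, 0 < q ^ t := fun t => pow_pos hq.pos t
      have hle : j * q ^ (k : ℕ) ≤ j * q ^ (l : ℕ) :=
        Nat.mul_le_mul_left j (Nat.pow_le_pow_right hq.pos hkl)
      have h1 : β ^ (j * q ^ (l : ℕ) - j * q ^ (k : ℕ)) = 1 := by
        apply mul_left_cancel₀ (pow_ne_zero (j * q ^ (k : ℕ)) hβ0)
        rw [← pow_add, Nat.add_sub_cancel' hle, mul_one]
        exact hxkl.symm
      have hdvd : L ∣ j * q ^ (k : ℕ) * (q ^ ((l : ℕ) - (k : ℕ)) - 1) := by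
        have heq : j * q ^ (k : ℕ) * (q ^ ((l : ℕ) - (k : ℕ)) - 1)
            = j * q ^ (l : ℕ) - j * q ^ (k : ℕ) := by
          rw [Nat.mul_sub, mul_one, mul_assoc, ← pow_add,
            Nat.add_sub_cancel' hkl]
        rw [heq]
        exact hβ.dvd_of_pow_eq_one _ h1
      have hdvd2 : L ∣ q ^ ((l : ℕ) - (k : ℕ)) - 1 := by
        have hco1 : Nat.Coprime L (j * q ^ (k : ℕ)) :=
          Nat.Coprime.mul_right hjL.symm ((hco.symm).pow_right _)
        exact (Nat.Coprime.dvd_of_dvd_mul_left hco1 hdvd)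
      have hmod : (q : ZMod L) ^ ((l : ℕ) - (k : ℕ)) = 1 := by
        have h1le : 1 ≤ q ^ ((l : ℕ) - (k : ℕ)) := Nat.one_le_pow _ _ hq.pos
        have : ((q ^ ((l : ℕ) - (k : ℕ)) - 1 : ℕ) : ZMod L) = 0 :=
          (ZMod.natCast_eq_zero_iff _ _).mpr hdvd2
        rw [Nat.cast_sub h1le, Nat.cast_pow, Nat.cast_one, sub_eq_zero] at this
        exact this.symm ▸ rfl
      have hmdvd : m ∣ (l : ℕ) - (k : ℕ) := hm ▸ orderOf_dvd_of_pow_eq_one hmod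
      have hlt : (l : ℕ) - (k : ℕ) < m := by
        have := l.isLt; omega
      have : (l : ℕ) - (k : ℕ) = 0 := Nat.eq_zero_of_dvd_of_lt hmdvd hlt
      omega
    intro k l hkl
    rcases le_total (k : ℕ) (l : ℕ) with h | h
    · exact Fin.ext (haux k l h hkl)
    · exact Fin.ext ((haux l k h hkl.symm).symm)
  -- the polynomial with coefficients a i vanishes at all x k
  set P : K[X] := ∑ i : Fin n, C (a i) * X ^ (i : ℕ) with hP
  have hPeval : ∀ k : Fin n, P.eval (x k) = 0 := by
    intro k
    rw [hP]
    simp only [eval_finset_sum, eval_mul, eval_C, eval_pow, eval_X]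
    exact key (k : ℕ)
  have hPdeg : P.natDegree < n := by
    have : P.natDegree ≤ n - 1 := by
      refine natDegree_sum_le_of_forall_le _ _ fun i _ => ?_
      exact le_trans (natDegree_C_mul_X_pow_le _ _) (by omega)
    omega
  have hP0 : P = 0 := by
    refine Polynomial.eq_zero_of_natDegree_lt_card_of_eval_eq_zero P hinj hPeval ?_
    simpa using hPdeg
  have : P.coeff (i0 : ℕ) = a i0 := by
    rw [hP, finset_sum_coeff]
    simp only [coeff_C_mul, coeff_X_pow]
    rw [Finset.sum_eq_single i0]
    · simp
    · intro b _ hb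
      have h : (i0 : ℕ) ≠ (b : ℕ) := fun h => hb (Fin.ext h.symm)
      simp [h]
    · exact fun h => absurd (Finset.mem_univ i0) h
  rw [hP0] at this
  simpa using this.symm
end

section
/- Let q be prime, L coprime to q, m the multiplicative order of q modulo L, and beta a primitive L-th root of unity in F_{q^m}. For any integer h and any j with 1 <= j <= L-1 and gcd(j, L) = 1, the m elements beta^{jh}, beta^{j(h+1)}, ..., beta^{j(h+m-1)} form a basis of F_{q^m} over F_q. -/
/-- Lemma 4 of the paper: for any integer `h` and any `j` with `1 ≤ j ≤ L-1` and
`gcd(j, L) = 1`, the `m` elements `β^{jh}, β^{j(h+1)}, …, β^{j(h+m-1)}` form a basis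
of `F_{q^m}` over `F_q`: they are `F_q`-linearly independent and `F_q`-span `F_{q^m}`
(elements of `F_q` being those `a` with `a ^ q = a`). -/
theorem consecutive_powers_basis
    (q L m : ℕ) (hq : q.Prime) (hL : 0 < L) (hco : Nat.Coprime q L)
    (hm : orderOf (q : ZMod L) = m)
    (K : Type*) [Field K] [Fintype K] (hcard : Fintype.card K = q ^ m)
    (β : K) (hβ : IsPrimitiveRoot β L)
    (h : ℤ) (j : ℕ) (hj1 : 1 ≤ j) (hj2 : j ≤ L - 1) (hjL : Nat.Coprime j L) :
    (∀ a : Fin m → K, (∀ i, a i ^ q = a i) →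
      ∑ i : Fin m, a i * β ^ ((j : ℤ) * (h + ((i : ℕ) : ℤ))) = 0 → ∀ i, a i = 0) ∧
    (∀ x : K, ∃ a : Fin m → K, (∀ i, a i ^ q = a i) ∧
      x = ∑ i : Fin m, a i * β ^ ((j : ℤ) * (h + ((i : ℕ) : ℤ)))) := by
  haveI : Fact q.Prime := ⟨hq⟩
  have hLne : L ≠ 0 := hL.ne'
  haveI : NeZero L := ⟨hLne⟩
  haveI : NeZero q := ⟨hq.pos.ne'⟩
  -- the unit of `q` in `ZMod L`
  obtain ⟨u, hu⟩ := (ZMod.isUnit_iff_coprime q L).mpr hco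
  have hmu : orderOf u = m := by rw [← hm, ← hu, orderOf_units]
  have hmpos : 0 < m := by rw [← hmu]; exact orderOf_pos u
  -- the characteristic of `K` is `q`
  obtain ⟨p, hcp⟩ := CharP.exists K
  haveI := hcp
  obtain ⟨n, hp, hpn⟩ := FiniteField.card K p
  have hpq : p = q := by
    have h1 : p ∣ q ^ m := by
      rw [← hcard, hpn]
      exact dvd_pow_self p n.ne_zero
    exact (Nat.prime_dvd_prime_iff_eq hp hq).mp (hp.dvd_of_dvd_pow h1)
  subst hpq
  letI : Algebra (ZMod p) K := ZMod.algebra K p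
  -- the primitive root `γ = β ^ j`
  have hβ0 : β ≠ 0 := hβ.ne_zero hLne
  set γ : K := β ^ j with hγdef
  have hγprim : IsPrimitiveRoot γ L := hβ.pow_of_coprime j hjL
  have hγ0 : γ ≠ 0 := hγprim.ne_zero hLne
  have hordγ : orderOf γ = L := hγprim.eq_orderOf.symm
  -- the powers `γ ^ (p ^ k)` for `k < m` are pairwise distinct
  have hinj : Function.Injective (fun k : Fin m => γ ^ p ^ (k : ℕ)) := by
    have key : ∀ k l : Fin m, (k : ℕ) ≤ (l : ℕ) →
        γ ^ p ^ (k : ℕ) = γ ^ p ^ (l : ℕ) → k = l := by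
      intro k l hkl hpow
      have hple : p ^ (k : ℕ) ≤ p ^ (l : ℕ) := Nat.pow_le_pow_right hq.pos hkl
      have hone : γ ^ (p ^ (l : ℕ) - p ^ (k : ℕ)) = 1 := by
        have hmul : γ ^ p ^ (k : ℕ) * γ ^ (p ^ (l : ℕ) - p ^ (k : ℕ))
            = γ ^ p ^ (k : ℕ) * 1 := by
          rw [mul_one, ← pow_add, Nat.add_sub_cancel' hple, hpow]
        exact mul_left_cancel₀ (pow_ne_zero _ hγ0) hmul
      have hdvdL : L ∣ p ^ (l : ℕ) - p ^ (k : ℕ) := (hγprim.pow_eq_one_iff_dvd _).mp hone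
      have hmodeq : p ^ (k : ℕ) ≡ p ^ (l : ℕ) [MOD L] := (Nat.modEq_iff_dvd' hple).mpr hdvdL
      have hpow : ((p : ZMod L)) ^ (k : ℕ) = ((p : ZMod L)) ^ (l : ℕ) := by
        have := (ZMod.natCast_eq_natCast_iff _ _ _).mpr hmodeq
        push_cast at this
        exact this
      rw [← hu, ← Units.val_pow_eq_pow_val, ← Units.val_pow_eq_pow_val] at hpow
      have hul : u ^ ((l : ℕ) - (k : ℕ)) = 1 := by
        have h2 : u ^ ((l : ℕ) - (k : ℕ)) * u ^ (k : ℕ) = 1 * u ^ (k : ℕ) := by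
          rw [one_mul, ← pow_add, Nat.sub_add_cancel hkl]
          exact (Units.ext hpow).symm
        exact mul_right_cancel h2
      have hdvd : m ∣ (l : ℕ) - (k : ℕ) := by
        have h4 := orderOf_dvd_of_pow_eq_one hul
        rwa [hmu] at h4
      have hlt : (l : ℕ) - (k : ℕ) < m := lt_of_le_of_lt (Nat.sub_le _ _) l.isLt
      have h0 : (l : ℕ) - (k : ℕ) = 0 := Nat.eq_zero_of_dvd_of_lt hdvd hlt
      exact Fin.ext (le_antisymm hkl (Nat.sub_eq_zero_iff_le.mp h0))
    intro k l hkl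
    rcases le_total (k : ℕ) (l : ℕ) with hle | hle
    · exact key k l hle hkl
    · exact (key l k hle hkl.symm).symm
  -- Part 1: linear independence
  have part1 : ∀ a : Fin m → K, (∀ i, a i ^ p = a i) →
      ∑ i : Fin m, a i * β ^ ((j : ℤ) * (h + ((i : ℕ) : ℤ))) = 0 → ∀ i, a i = 0 := by
    intro a ha hsum i0
    have hrw : ∀ i : Fin m, β ^ ((j : ℤ) * (h + ((i : ℕ) : ℤ)))
        = β ^ ((j : ℤ) * h) * γ ^ (i : ℕ) := by
      intro i
      rw [mul_add, zpow_add₀ hβ0, hγdef, ← pow_mul, ← zpow_natCast β (j * (i : ℕ))]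
      norm_cast
    have hS : ∑ i : Fin m, a i * γ ^ (i : ℕ) = 0 := by
      have h2 : ∑ i : Fin m, a i * β ^ ((j : ℤ) * (h + ((i : ℕ) : ℤ)))
          = β ^ ((j : ℤ) * h) * ∑ i : Fin m, a i * γ ^ (i : ℕ) := by
        rw [Finset.mul_sum]
        exact Finset.sum_congr rfl fun i _ => by rw [hrw i]; ring
      rw [h2] at hsum
      rcases mul_eq_zero.mp hsum with h3 | h3
      · exact absurd h3 (zpow_ne_zero _ hβ0)
      · exact h3
    have hiter : ∀ k : ℕ, ∑ i : Fin m, a i * (γ ^ p ^ k) ^ (i : ℕ) = 0 := by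
      intro k
      induction k with
      | zero => simpa using hS
      | succ k ih =>
        have h4 : frobenius K p (∑ i : Fin m, a i * (γ ^ p ^ k) ^ (i : ℕ))
            = ∑ i : Fin m, a i * (γ ^ p ^ (k + 1)) ^ (i : ℕ) := by
          rw [map_sum]
          refine Finset.sum_congr rfl fun i _ => ?_
          rw [map_mul, frobenius_def, frobenius_def, ha i, ← pow_mul, ← pow_mul, ← pow_mul]
          congr 1
          rw [pow_succ]
          ring
        rw [← h4, ih, map_zero]
    let P : Polynomial K := ∑ i : Fin m, Polynomial.C (a i) * Polynomial.X ^ (i : ℕ)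
    have hP0 : P = 0 := by
      apply Polynomial.eq_zero_of_natDegree_lt_card_of_eval_eq_zero P hinj
      · intro k
        simpa [P, Polynomial.eval_finset_sum] using hiter (k : ℕ)
      · rw [Fintype.card_fin]
        refine lt_of_le_of_lt (Polynomial.natDegree_sum_le_of_forall_le _ _
          (fun i _ => ?_)) (Nat.sub_lt hmpos one_pos |>.trans_le le_rfl)
        exact le_trans (Polynomial.natDegree_C_mul_X_pow_le _ _) (Nat.le_sub_one_of_lt i.isLt)
    have hc : P.coeff (i0 : ℕ) = a i0 := by
      simp only [P, Polynomial.finset_sum_coeff, Polynomial.coeff_C_mul,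
        Polynomial.coeff_X_pow]
      rw [Finset.sum_eq_single i0] <;> simp +contextual [Fin.val_eq_val, eq_comm]
    rw [hP0] at hc
    simpa using hc.symm
  refine ⟨part1, ?_⟩
  -- Part 2: spanning
  have hfr : Module.finrank (ZMod p) K = m := by
    have hc := Module.card_eq_pow_finrank (K := ZMod p) (V := K)
    rw [ZMod.card, hcard] at hc
    exact (Nat.pow_right_injective hq.two_le hc.symm)
  intro x
  haveI : Nonempty (Fin m) := ⟨⟨0, hmpos⟩⟩
  set v : Fin m → K := fun i => β ^ ((j : ℤ) * (h + ((i : ℕ) : ℤ))) with hv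
  have hli : LinearIndependent (ZMod p) v := by
    rw [Fintype.linearIndependent_iff]
    intro g hg i
    have h5 : ∀ i, (algebraMap (ZMod p) K (g i)) ^ p = algebraMap (ZMod p) K (g i) := by
      intro i
      rw [← map_pow, ZMod.pow_card]
    have h6 : ∑ i : Fin m, algebraMap (ZMod p) K (g i) * v i = 0 := by
      rw [← hg]
      exact Finset.sum_congr rfl fun i _ => (Algebra.smul_def _ _).symm
    have := part1 (fun i => algebraMap (ZMod p) K (g i)) h5 h6 i
    exact (algebraMap (ZMod p) K).injective (by simpa using this)
  let b := basisOfLinearIndependentOfCardEqFinrank hli (by rw [Fintype.card_fin, hfr])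
  have hb : ⇑b = v := coe_basisOfLinearIndependentOfCardEqFinrank _ _
  refine ⟨fun i => algebraMap (ZMod p) K (b.repr x i),
    fun i => by rw [← map_pow, ZMod.pow_card], ?_⟩
  have h7 := b.sum_repr x
  conv_lhs => rw [← h7]
  refine Finset.sum_congr rfl fun i _ => ?_
  rw [Algebra.smul_def, hb]
end

section
/- Let q be prime, L coprime to q, m the multiplicative order of q modulo L, beta a primitive L-th root of unity in F_{q^m}, J the set of integers 1 <= j <= L-1 coprime to L, and n <= m. For exponents l_0, ..., l_{n-1} given by l_i = i + c mod L for a fixed constant c, the following holds: for every j in J and every nonzero vector (a_0, ..., a_{n-1}) in F_q^n, sum_{i=0}^{n-1} a_i beta^{j l_i} is nonzero. Equivalently, beta^{j l_0}, ..., beta^{j l_{n-1}} are F_q-linearly independent for every j in J. -/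
/-!
Put `γ = β ^ j`, again a primitive `L`-th root of unity. Since `γ ^ L = 1`, the sum equals
`γ ^ c * f(γ)` with `f = ∑ aᵢ Xⁱ`. As `|K| = q ^ m`, `q` is a power of the characteristic, so
`x ↦ x ^ q` is a ring endomorphism of `K`; it fixes the coefficients `aᵢ`, so `f(γ) = 0` forces
`f(γ ^ q ^ t) = 0` for all `t`. The roots `γ ^ q ^ t`, `t < m`, are pairwise distinct because `q` has order `m` modulo
`L = orderOf γ`. A polynomial of degree `< n ≤ m` with `n` distinct roots vanishes (Vandermonde).
-/

lemma sum_mul_pow_add_mod_orderOf {R : Type*} [CommSemiring R] {n : ℕ} (a : Fin n → R) (γ : R)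
    (c : ℕ) :
    ∑ i : Fin n, a i * γ ^ (((i : ℕ) + c) % orderOf γ) =
      (∑ i : Fin n, a i * γ ^ (i : ℕ)) * γ ^ c := by
  simp_rw [pow_mod_orderOf, pow_add, Finset.sum_mul, mul_assoc]

lemma IsOfFinOrder.injOn_pow_pow {M : Type*} [Monoid M] {γ : M} (hγ : IsOfFinOrder γ) (q : ℕ) :
    Set.InjOn (fun t ↦ γ ^ q ^ t) (Set.Iio (orderOf (q : ZMod (orderOf γ)))) := by
  intro s hs t ht hst
  refine pow_injOn_Iio_orderOf hs ht ?_
  simp only [← Nat.cast_pow, ZMod.natCast_eq_natCast_iff]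
  exact hγ.pow_eq_pow_iff_modEq.mp hst

lemma eq_zero_of_sum_mul_pow_eq_zero_of_injOn_iterate {R : Type*} [CommRing R] [IsDomain R]
    (φ : R →+* R) {n : ℕ} {a : Fin n → R} (ha : ∀ i, φ (a i) = a i) {x : R}
    (hx : Set.InjOn (fun t ↦ φ^[t] x) (Set.Iio n)) (h : ∑ i : Fin n, a i * x ^ (i : ℕ) = 0) :
    a = 0 := by
  refine Matrix.eq_zero_of_forall_index_sum_mul_pow_eq_zero (f := fun t : Fin n ↦ φ^[t] x)
    (fun s t hst ↦ Fin.ext (hx s.isLt t.isLt hst)) fun t ↦ ?_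
  have hfix : ∀ i, (φ ^ (t : ℕ)) (a i) = a i := fun i ↦ by
    rw [RingHom.coe_pow]; exact Function.iterate_fixed (ha i) t
  calc ∑ i : Fin n, a i * (φ^[t] x) ^ (i : ℕ)
      = (φ ^ (t : ℕ)) (∑ i : Fin n, a i * x ^ (i : ℕ)) := by
        simp only [map_sum, map_mul, map_pow, hfix, RingHom.coe_pow]
    _ = 0 := by rw [h, map_zero]

theorem consecutive_exponents_nonvanishing_general
    (q L m n c : ℕ) (hm : orderOf (q : ZMod L) = m)
    (K : Type*) [Field K] [Fintype K] (hcard : Fintype.card K = q ^ m)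
    (β : K) (hβ : IsPrimitiveRoot β L)
    (hn : n ≤ m) :
    ∀ j : ℕ, 1 ≤ j → j ≤ L - 1 → Nat.Coprime j L →
      ∀ a : Fin n → K, (∀ i, a i ^ q = a i) → (∃ i, a i ≠ 0) →
        ∑ i : Fin n, a i * β ^ (j * (((i : ℕ) + c) % L)) ≠ 0 := by
  intro j hj₁ hjL hjco a ha ⟨i₀, hi₀⟩ hsum
  have hγ : IsPrimitiveRoot (β ^ j) L := hβ.pow_of_coprime j hjco
  have hL : L ≠ 0 := by omega
  simp_rw [pow_mul] at hsum
  rw [hγ.eq_orderOf, sum_mul_pow_add_mod_orderOf, mul_eq_zero,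
    or_iff_left (pow_ne_zero _ (hγ.ne_zero hL))] at hsum
  obtain ⟨p, _, d, hp, hpd⟩ := FiniteField.card' K
  obtain ⟨k, -, rfl⟩ : ∃ k ≤ (d : ℕ), q = p ^ k :=
    (Nat.dvd_prime_pow hp).1 (hpd ▸ hcard ▸ dvd_pow_self q (by have := i₀.isLt; omega))
  have := ExpChar.prime (R := K) hp
  have hinj : Set.InjOn (fun t ↦ (iterateFrobenius K p k)^[t] (β ^ j)) (Set.Iio n) := by
    have hpow := (hγ.isOfFinOrder hL).injOn_pow_pow (p ^ k)
    rw [← hγ.eq_orderOf, hm] at hpow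
    simpa only [← coe_iterateFrobenius_mul, iterateFrobenius_def, pow_mul]
      using hpow.mono (Set.Iio_subset_Iio hn)
  exact hi₀ (congrFun (eq_zero_of_sum_mul_pow_eq_zero_of_injOn_iterate _ ha hinj hsum) i₀)

/-- With `q` prime, `L` coprime to `q`, `m` the multiplicative order of `q` mod `L`,
`β` a primitive `L`-th root of unity in `F_{q^m}`, `n ≤ m`, and exponents
`l_i = (i + c) mod L`:  for every `j` coprime to `L` with `1 ≤ j ≤ L-1` and every
nonzero vector `(a_0, …, a_{n-1})` over `F_q` (elements of `F_q` being those `a`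
with `a ^ q = a`), the sum `∑_i a_i β^{j l_i}` is nonzero; equivalently,
`β^{j l_0}, …, β^{j l_{n-1}}` are `F_q`-linearly independent. -/
theorem consecutive_exponents_nonvanishing
    (q L m n c : ℕ) (hq : q.Prime) (hL : 0 < L) (hco : Nat.Coprime q L)
    (hm : orderOf (q : ZMod L) = m)
    (K : Type*) [Field K] [Fintype K] (hcard : Fintype.card K = q ^ m)
    (β : K) (hβ : IsPrimitiveRoot β L)
    (hn : n ≤ m) (hc : c ≤ L - 1) :
    ∀ j : ℕ, 1 ≤ j → j ≤ L - 1 → Nat.Coprime j L →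
      ∀ a : Fin n → K, (∀ i, a i ^ q = a i) → (∃ i, a i ≠ 0) →
        ∑ i : Fin n, a i * β ^ (j * (((i : ℕ) + c) % L)) ≠ 0 :=
  consecutive_exponents_nonvanishing_general q L m n c hm K hcard β hβ hn
end
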